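/- Let A be an arborescence with weight functions w, c : E(A) → ℝ_{>0} satisfying the combined triangle inequality and the combined 2-optimality condition, and assume c(A) ≥ 18 · w(A). Then c(A) ≤ 12 · (log |E(A)| / log log |E(A)|) · w(A). -/
import Mathlib


open Classical

/-- An arborescence: a connected directed acyclic graph in which every vertex
has in-degree at most 1, encoded by its finite vertex set, its root, and the
parent map.  Every non-root vertex `v` carries the unique incoming edge
`(parent v, v)`, so edges are identified with non-root vertices. -/
structure Arbor (α : Type*) where
  verts : Finset α
  root : α
  parent : α → α
  root_mem : root ∈ verts
  parent_mem : ∀ v ∈ verts, v ≠ root → parent v ∈ verts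
  reaches_root : ∀ v ∈ verts, ∃ n : ℕ, parent^[n] v = root

variable {α : Type*} [DecidableEq α]

/-- The edges of an arborescence, identified with the non-root vertices:
the vertex `v` stands for the edge `(parent v, v)`. -/
def Arbor.edges (A : Arbor α) : Finset α := A.verts.erase A.root

/-- `δ⁺(y)`: the edges leaving `y`, identified with the children of `y`. -/
def Arbor.children (A : Arbor α) (y : α) : Finset α :=
  A.edges.filter fun u => A.parent u = y

/-- The combined triangle inequality:
`c(e) ≤ w(e) + ∑_{f ∈ δ⁺(y)} c(f)` for every edge `e = (x,y)`. -/
def Arbor.CombinedTriangle (A : Arbor α) (w c : α → ℝ) : Prop :=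
  ∀ y ∈ A.edges, c y ≤ w y + ∑ u ∈ A.children y, c u

/-- The combined 2-optimality condition:
`c(x,y) + c(y,z) ≤ w(x,y) + ∑_{f ∈ δ⁺(y) \ {(y,z)}} c(f)`
for all pairs of edges `(x,y), (y,z)`. -/
def Arbor.Combined2Opt (A : Arbor α) (w c : α → ℝ) : Prop :=
  ∀ y ∈ A.edges, ∀ z ∈ A.edges, A.parent z = y →
    c y + c z ≤ w y + ∑ u ∈ (A.children y).erase z, c u
/-- subtree of edge `e` -/
noncomputable def Arbor.sub (A : Arbor α) (e : α) : Finset α :=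
  A.edges.filter fun f => ∃ k : ℕ, (∀ i ≤ k, A.parent^[i] f ∈ A.edges) ∧ A.parent^[k] f = e

namespace Arbor

variable (A : Arbor α)

lemma mem_sub_iff {e f : α} : f ∈ A.sub e ↔ f ∈ A.edges ∧
    ∃ k : ℕ, (∀ i ≤ k, A.parent^[i] f ∈ A.edges) ∧ A.parent^[k] f = e := by
  simp [Arbor.sub]

lemma sub_subset_edges (e : α) : A.sub e ⊆ A.edges := Finset.filter_subset _ _

lemma edge_ne_root {v : α} (hv : v ∈ A.edges) : v ≠ A.root := Finset.ne_of_mem_erase hv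

lemma edge_mem_verts {v : α} (hv : v ∈ A.edges) : v ∈ A.verts := Finset.mem_of_mem_erase hv

lemma mem_sub_self {e : α} (he : e ∈ A.edges) : e ∈ A.sub e := by
  rw [mem_sub_iff]
  exact ⟨he, 0, by intro i hi; simpa [Nat.le_zero.mp hi] using he, rfl⟩

lemma no_cycle {v : α} {m : ℕ} (hm : 1 ≤ m) (hcyc : A.parent^[m] v = v)
    (hE : ∀ i < m, A.parent^[i] v ∈ A.edges) : False := by
  have hv : v ∈ A.verts := A.edge_mem_verts (by simpa using hE 0 hm)
  have key : ∀ N : ℕ, A.parent^[N] v = A.parent^[N % m] v := by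
    intro N
    induction N using Nat.strong_induction_on with
    | _ N ih =>
      rcases lt_or_ge N m with h | h
      · rw [Nat.mod_eq_of_lt h]
      · have h2 : A.parent^[N] v = A.parent^[N - m] v := by
          conv_lhs => rw [show N = (N - m) + m by omega, Function.iterate_add_apply, hcyc]
        rw [h2, ih (N - m) (by omega), Nat.mod_eq_sub_mod h]
  obtain ⟨N, hN⟩ := A.reaches_root v hv
  have := hE (N % m) (Nat.mod_lt _ (by omega))
  rw [← key N, hN] at this
  exact A.edge_ne_root this rfl

lemma mem_children_iff {y g : α} : g ∈ A.children y ↔ g ∈ A.edges ∧ A.parent g = y := by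
  simp [Arbor.children]

lemma sub_child_subset {e g : α} (he : e ∈ A.edges) (hg : g ∈ A.children e) :
    A.sub g ⊆ A.sub e := by
  intro f hf
  rw [mem_sub_iff] at hf ⊢
  obtain ⟨hfE, k, hchain, hk⟩ := hf
  obtain ⟨hgE, hpg⟩ := (A.mem_children_iff).mp hg
  refine ⟨hfE, k + 1, ?_, ?_⟩
  · intro i hi
    rcases Nat.lt_or_ge i (k+1) with h | h
    · exact hchain i (by omega)
    · have : i = k + 1 := by omega
      subst this
      rw [Function.iterate_succ_apply', hk, hpg]
      exact he
  · rw [Function.iterate_succ_apply', hk, hpg]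

lemma notMem_sub_child {e g : α} (hg : g ∈ A.children e) : e ∉ A.sub g := by
  intro hmem
  rw [mem_sub_iff] at hmem
  obtain ⟨heE, k, hchain, hk⟩ := hmem
  obtain ⟨hgE, hpg⟩ := (A.mem_children_iff).mp hg
  refine A.no_cycle (v := e) (m := k + 1) (by omega) ?_ ?_
  · rw [Function.iterate_succ_apply', hk, hpg]
  · intro i hi
    exact hchain i (by omega)

/-- Disjointness of subtrees of distinct children of a common vertex. -/
lemma sub_disjoint {y g g' : α} (hg : g ∈ A.children y) (hg' : g' ∈ A.children y)
    (hne : g ≠ g') : Disjoint (A.sub g) (A.sub g') := by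
  classical
  rw [Finset.disjoint_left]
  intro f hf hf'
  rw [mem_sub_iff] at hf hf'
  obtain ⟨hfE, k, hchain, hk⟩ := hf
  obtain ⟨-, k', hchain', hk'⟩ := hf'
  obtain ⟨hgE, hpg⟩ := (A.mem_children_iff).mp hg
  obtain ⟨hg'E, hpg'⟩ := (A.mem_children_iff).mp hg'
  -- auxiliary: k < k' impossible
  have aux : ∀ (a b : α) (ka kb : ℕ), a ∈ A.edges → b ∈ A.edges →
      A.parent a = y → A.parent b = y →
      (∀ i ≤ kb, A.parent^[i] f ∈ A.edges) →
      A.parent^[ka] f = a → A.parent^[kb] f = b → ka < kb → False := by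
    intro a b ka kb haE hbE hpa hpb hchainb hka hkb hlt
    -- parent^[ka+1] f = y, parent^[kb+1] f = y
    have hya : A.parent^[ka+1] f = y := by rw [Function.iterate_succ_apply', hka, hpa]
    have hyb : A.parent^[kb+1] f = y := by rw [Function.iterate_succ_apply', hkb, hpb]
    have hcyc : A.parent^[kb - ka] y = y := by
      have : A.parent^[(kb - ka) + (ka + 1)] f = y := by
        have h1 : (kb - ka) + (ka + 1) = kb + 1 := by omega
        rw [h1]; exact hyb
      rwa [Function.iterate_add_apply, hya] at this
    refine A.no_cycle (v := y) (m := kb - ka) (by omega) hcyc ?_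
    intro i hi
    have : A.parent^[i] y = A.parent^[i + (ka + 1)] f := by
      rw [Function.iterate_add_apply, hya]
    rw [this]
    exact hchainb _ (by omega)
  rcases lt_trichotomy k k' with h | h | h
  · exact aux g g' k k' hgE hg'E hpg hpg' hchain' hk hk' h
  · apply hne; rw [← hk, ← hk', h]
  · exact aux g' g k' k hg'E hgE hpg' hpg hchain hk' hk h

end Arbor

namespace Arbor

variable (A : Arbor α)

lemma child_mem_edges {y g : α} (hg : g ∈ A.children y) : g ∈ A.edges :=
  ((A.mem_children_iff).mp hg).1

lemma pairwise_disjoint_sub (y : α) :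
    Set.PairwiseDisjoint ↑(A.children y) A.sub := by
  intro g hg g' hg' hne
  exact A.sub_disjoint (by simpa using hg) (by simpa using hg') hne

lemma notMem_biUnion_children {e : α} :
    e ∉ (A.children e).biUnion A.sub := by
  intro h
  rw [Finset.mem_biUnion] at h
  obtain ⟨g, hg, hmem⟩ := h
  exact A.notMem_sub_child hg hmem

lemma sub_eq_insert {e : α} (he : e ∈ A.edges) :
    A.sub e = insert e ((A.children e).biUnion A.sub) := by
  apply Finset.Subset.antisymm
  · intro f hf
    rw [mem_sub_iff] at hf
    obtain ⟨hfE, k, hchain, hk⟩ := hf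
    rcases k with _ | k₀
    · simp only [Function.iterate_zero_apply] at hk
      subst hk
      exact Finset.mem_insert_self _ _
    · apply Finset.mem_insert_of_mem
      rw [Finset.mem_biUnion]
      refine ⟨A.parent^[k₀] f, ?_, ?_⟩
      · rw [mem_children_iff]
        refine ⟨hchain k₀ (by omega), ?_⟩
        have h' := Function.iterate_succ_apply' A.parent k₀ f
        rw [← h']
        exact hk
      · rw [mem_sub_iff]
        exact ⟨hfE, k₀, fun i hi => hchain i (by omega), rfl⟩
  · intro f hf
    rcases Finset.mem_insert.mp hf with h | h
    · subst h; exact A.mem_sub_self he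
    · rw [Finset.mem_biUnion] at h
      obtain ⟨g, hg, hmem⟩ := h
      exact A.sub_child_subset he hg hmem

lemma sum_sub {e : α} (he : e ∈ A.edges) (F : α → ℝ) :
    ∑ f ∈ A.sub e, F f = F e + ∑ g ∈ A.children e, ∑ f ∈ A.sub g, F f := by
  rw [A.sub_eq_insert he, Finset.sum_insert (A.notMem_biUnion_children),
    Finset.sum_biUnion (A.pairwise_disjoint_sub e)]

lemma card_sub {e : α} (he : e ∈ A.edges) :
    (A.sub e).card = 1 + ∑ g ∈ A.children e, (A.sub g).card := by
  rw [A.sub_eq_insert he, Finset.card_insert_of_notMem (A.notMem_biUnion_children),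
    Finset.card_biUnion]
  · omega
  · intro g hg g' hg' hne
    exact A.sub_disjoint hg hg' hne

lemma one_le_card_sub {e : α} (he : e ∈ A.edges) : 1 ≤ (A.sub e).card :=
  Finset.card_pos.mpr ⟨e, A.mem_sub_self he⟩

lemma card_sub_child_lt {e g : α} (he : e ∈ A.edges) (hg : g ∈ A.children e) :
    (A.sub g).card < (A.sub e).card := by
  apply Finset.card_lt_card
  rw [Finset.ssubset_iff_of_subset (A.sub_child_subset he hg)]
  exact ⟨e, A.mem_sub_self he, A.notMem_sub_child hg⟩

lemma cost_le_weight {w c : α → ℝ} (htri : A.CombinedTriangle w c) :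
    ∀ N : ℕ, ∀ e ∈ A.edges, (A.sub e).card ≤ N → c e ≤ ∑ f ∈ A.sub e, w f := by
  intro N
  induction N with
  | zero => intro e he hcard; have := A.one_le_card_sub he; omega
  | succ N ih =>
    intro e he hcard
    calc c e ≤ w e + ∑ g ∈ A.children e, c g := htri e he
    _ ≤ w e + ∑ g ∈ A.children e, ∑ f ∈ A.sub g, w f := by
        gcongr with g hg
        exact ih g (A.child_mem_edges hg)
          (by have := A.card_sub_child_lt he hg; omega)
    _ = ∑ f ∈ A.sub e, w f := (A.sum_sub he w).symm

end Arbor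

noncomputable def psiA (j m : ℕ) : ℝ :=
  Real.log m / Real.log ((j : ℝ) + 1) + (j : ℝ) / 2

lemma logj_pos {j : ℕ} (hj : 2 ≤ j) : 0 < Real.log ((j : ℝ) + 1) := by
  apply Real.log_pos
  have : (2 : ℝ) ≤ (j : ℝ) := by exact_mod_cast hj
  linarith

lemma psi_mono {j a b : ℕ} (hj : 2 ≤ j) (ha : 1 ≤ a) (hab : a ≤ b) :
    psiA j a ≤ psiA j b := by
  unfold psiA
  have h1 : Real.log (a : ℝ) ≤ Real.log (b : ℝ) := by
    apply Real.log_le_log (by exact_mod_cast ha) (by exact_mod_cast hab)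
  have := logj_pos hj
  gcongr

lemma psi_ge {j m : ℕ} (hj : 2 ≤ j) (hm : 1 ≤ m) : (j : ℝ) / 2 ≤ psiA j m := by
  unfold psiA
  have h1 : 0 ≤ Real.log (m : ℝ) := Real.log_nonneg (by exact_mod_cast hm)
  have := logj_pos hj
  have : 0 ≤ Real.log (m : ℝ) / Real.log ((j : ℝ) + 1) := by positivity
  linarith

lemma psi_succ {j a b : ℕ} (hj : 2 ≤ j) (ha : 1 ≤ a) (h : (j + 1) * a ≤ b) :
    psiA j a + 1 ≤ psiA j b := by
  unfold psiA
  have hL := logj_pos hj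
  have hja : Real.log (((j + 1) * a : ℕ) : ℝ) = Real.log ((j : ℝ) + 1) + Real.log (a : ℝ) := by
    have hcast : (((j + 1) * a : ℕ) : ℝ) = ((j : ℝ) + 1) * (a : ℝ) := by push_cast; ring
    rw [hcast, Real.log_mul (by positivity)
      (by exact_mod_cast Nat.one_le_iff_ne_zero.mp ha)]
  have hmono : Real.log (((j + 1) * a : ℕ) : ℝ) ≤ Real.log (b : ℝ) :=
    Real.log_le_log (by positivity) (by exact_mod_cast h)
  rw [hja] at hmono
  have key : (Real.log ((j : ℝ) + 1) + Real.log (a : ℝ)) / Real.log ((j : ℝ) + 1)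
      ≤ Real.log (b : ℝ) / Real.log ((j : ℝ) + 1) := by gcongr
  rw [add_div, div_self (ne_of_gt hL)] at key
  linarith

namespace Arbor

variable (A : Arbor α)

lemma master_sub {w c : α → ℝ} (hw : ∀ v ∈ A.edges, 0 < w v) (hc : ∀ v ∈ A.edges, 0 < c v)
    (htri : A.CombinedTriangle w c) (h2opt : A.Combined2Opt w c)
    {j : ℕ} (hj : 2 ≤ j) :
    ∀ N : ℕ, ∀ e ∈ A.edges, (A.sub e).card ≤ N →
      (∑ f ∈ A.sub e, c f) + ((j : ℝ) - 2) / 2 * c e ≤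
        psiA j (A.sub e).card * ∑ f ∈ A.sub e, w f := by
  intro N
  induction N with
  | zero => intro e he hcard; have := A.one_le_card_sub he; omega
  | succ N ih =>
    intro e he hcard
    classical
    set D := A.children e with hD
    set m := (A.sub e).card with hm
    set Q := D.filter (fun g => m ≤ (j + 1) * (A.sub g).card) with hQdef
    set t := Q.card with ht
    have hm1 : 1 ≤ m := A.one_le_card_sub he
    have hQsubD : Q ⊆ D := Finset.filter_subset _ _
    have hDedges : ∀ g ∈ D, g ∈ A.edges := fun g hg => A.child_mem_edges hg
    have hcards : m = 1 + ∑ g ∈ D, (A.sub g).card := A.card_sub he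
    -- t ≤ j
    have htj : t ≤ j := by
      by_contra hcon
      push_neg at hcon
      have h1 : ∀ g ∈ Q, m ≤ (j + 1) * (A.sub g).card := by
        intro g hg; exact (Finset.mem_filter.mp hg).2
      have h2 : Q.card * m ≤ ∑ g ∈ Q, (j + 1) * (A.sub g).card := by
        calc Q.card * m = ∑ _g ∈ Q, m := by rw [Finset.sum_const, smul_eq_mul]
        _ ≤ _ := Finset.sum_le_sum h1
      rw [← Finset.mul_sum] at h2
      have h3 : ∑ g ∈ Q, (A.sub g).card ≤ ∑ g ∈ D, (A.sub g).card :=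
        Finset.sum_le_sum_of_subset hQsubD
      have h4 : (j + 1) * m ≤ Q.card * m :=
        Nat.mul_le_mul_right m (by omega)
      have h5 : (j + 1) * (∑ g ∈ Q, (A.sub g).card) ≤ (j + 1) * (∑ g ∈ D, (A.sub g).card) :=
        Nat.mul_le_mul_left _ h3
      have h6 : (j + 1) * m ≤ (j + 1) * (∑ g ∈ D, (A.sub g).card) := by omega
      rw [hcards, Nat.mul_add, Nat.mul_one] at h6
      omega
    -- the star inequality
    have hstar : c e + 2 / (t : ℝ) * ∑ g ∈ Q, c g ≤ w e + ∑ g ∈ D, c g := by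
      rcases Nat.eq_zero_or_pos t with ht0 | htpos
      · have : Q = ∅ := Finset.card_eq_zero.mp ht0
        rw [this]
        simp only [Finset.sum_empty, mul_zero, add_zero]
        exact htri e he
      · have hz : ∀ z ∈ Q, c e + 2 * c z ≤ w e + ∑ g ∈ D, c g := by
          intro z hz
          have hzD : z ∈ D := hQsubD hz
          have hzE : z ∈ A.edges := hDedges z hzD
          have hpz : A.parent z = e := ((A.mem_children_iff).mp hzD).2
          have h2 := h2opt e he z hzE hpz
          have herase : ∑ u ∈ (A.children e).erase z, c u = (∑ g ∈ D, c g) - c z := by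
            rw [← hD]
            exact Finset.sum_erase_eq_sub hzD
          rw [herase] at h2
          linarith
        have hsum : (t : ℝ) * c e + 2 * ∑ g ∈ Q, c g ≤ (t : ℝ) * (w e + ∑ g ∈ D, c g) := by
          have h7 := Finset.sum_le_sum hz
          simp only [Finset.sum_add_distrib, Finset.sum_const, smul_eq_mul, nsmul_eq_mul,
            ← Finset.mul_sum] at h7
          rw [← ht] at h7
          push_cast at h7
          linarith
        have htpos' : (0 : ℝ) < t := by exact_mod_cast htpos
        have hkey : (t : ℝ) * (c e + 2 / (t : ℝ) * ∑ g ∈ Q, c g)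
            = (t : ℝ) * c e + 2 * ∑ g ∈ Q, c g := by
          field_simp
        have : (t : ℝ) * (c e + 2 / (t : ℝ) * ∑ g ∈ Q, c g)
            ≤ (t : ℝ) * (w e + ∑ g ∈ D, c g) := by rw [hkey]; exact hsum
        exact le_of_mul_le_mul_left this htpos'
    -- bounds for terms
    have hIH : ∀ g ∈ D, (∑ f ∈ A.sub g, c f) + ((j : ℝ) - 2) / 2 * c g ≤
        psiA j (A.sub g).card * ∑ f ∈ A.sub g, w f := by
      intro g hg
      exact ih g (hDedges g hg) (by have := A.card_sub_child_lt he hg; omega)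
    have hWg0 : ∀ g ∈ D, 0 ≤ ∑ f ∈ A.sub g, w f := by
      intro g hg
      exact Finset.sum_nonneg fun f hf => (hw f (A.sub_subset_edges g hf)).le
    have hQ'bound : ∀ g ∈ D, g ∉ Q → (j : ℝ) / 2 * c g + ∑ f ∈ A.sub g, c f ≤
        psiA j m * ∑ f ∈ A.sub g, w f := by
      intro g hgD hgQ
      have hsmall : (j + 1) * (A.sub g).card ≤ m := by
        by_contra hcon
        push_neg at hcon
        exact hgQ (Finset.mem_filter.mpr ⟨hgD, by omega⟩)
      have hcw : c g ≤ ∑ f ∈ A.sub g, w f :=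
        A.cost_le_weight htri ((A.sub g).card) g (hDedges g hgD) le_rfl
      have hpsi : psiA j (A.sub g).card + 1 ≤ psiA j m :=
        psi_succ hj (A.one_le_card_sub (hDedges g hgD)) hsmall
      have h1 := hIH g hgD
      have hWg := hWg0 g hgD
      nlinarith [hWg, hpsi, h1, hcw]
    have hQbound : ∀ g ∈ Q, ((j : ℝ) / 2 - (j : ℝ) / (t : ℝ)) * c g + ∑ f ∈ A.sub g, c f ≤
        psiA j m * ∑ f ∈ A.sub g, w f := by
      intro g hgQ
      have hgD : g ∈ D := hQsubD hgQ
      have htpos : 0 < t := Finset.card_pos.mpr ⟨g, hgQ⟩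
      have htpos' : (0 : ℝ) < t := by exact_mod_cast htpos
      have htj' : (t : ℝ) ≤ (j : ℝ) := by exact_mod_cast htj
      have hjt : (1 : ℝ) ≤ (j : ℝ) / (t : ℝ) := by
        rw [le_div_iff₀ htpos']; linarith
      have hcoef : (j : ℝ) / 2 - (j : ℝ) / (t : ℝ) ≤ ((j : ℝ) - 2) / 2 := by linarith
      have hcg : 0 < c g := hc g (hDedges g hgD)
      have h1 := hIH g hgD
      have hpsi : psiA j (A.sub g).card ≤ psiA j m :=
        psi_mono hj (A.one_le_card_sub (hDedges g hgD))
          (by have := A.card_sub_child_lt he hgD; omega)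
      have hWg := hWg0 g hgD
      nlinarith [hpsi, hWg, h1, hcg, hcoef]
    -- assemble
    set Q' := D.filter (fun g => ¬ (m ≤ (j + 1) * (A.sub g).card)) with hQ'def
    have hsplit : ∀ F : α → ℝ, (∑ g ∈ Q, F g) + ∑ g ∈ Q', F g = ∑ g ∈ D, F g := by
      intro F
      rw [hQdef, hQ'def]
      exact Finset.sum_filter_add_sum_filter_not D _ F
    have hsplitc := hsplit c
    have hsplitT := hsplit (fun g => ∑ f ∈ A.sub g, c f)
    have hsplitW := hsplit (fun g => ∑ f ∈ A.sub g, w f)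
    have hA : ((j : ℝ) / 2 - (j : ℝ) / (t : ℝ)) * (∑ g ∈ Q, c g) + ∑ g ∈ Q, ∑ f ∈ A.sub g, c f
        ≤ psiA j m * ∑ g ∈ Q, ∑ f ∈ A.sub g, w f := by
      have h8 := Finset.sum_le_sum hQbound
      simp only [Finset.sum_add_distrib, ← Finset.mul_sum] at h8
      exact h8
    have hB : ((j : ℝ) / 2) * (∑ g ∈ Q', c g) + ∑ g ∈ Q', ∑ f ∈ A.sub g, c f
        ≤ psiA j m * ∑ g ∈ Q', ∑ f ∈ A.sub g, w f := by
      have h9 : ∀ g ∈ Q', (j : ℝ) / 2 * c g + ∑ f ∈ A.sub g, c f ≤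
          psiA j m * ∑ f ∈ A.sub g, w f := by
        intro g hg
        rw [hQ'def, Finset.mem_filter] at hg
        refine hQ'bound g hg.1 ?_
        rw [hQdef, Finset.mem_filter]
        tauto
      have h8 := Finset.sum_le_sum h9
      simp only [Finset.sum_add_distrib, ← Finset.mul_sum] at h8
      exact h8
    have hgoal1 : ∑ f ∈ A.sub e, c f = c e + ∑ g ∈ D, ∑ f ∈ A.sub g, c f := by
      rw [hD]; exact A.sum_sub he c
    have hgoal2 : ∑ f ∈ A.sub e, w f = w e + ∑ g ∈ D, ∑ f ∈ A.sub g, w f := by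
      rw [hD]; exact A.sum_sub he w
    rw [hgoal1, hgoal2]
    have hce : ((j : ℝ) / 2) * c e ≤ ((j : ℝ) / 2) *
        (w e + ∑ g ∈ D, c g - 2 / (t : ℝ) * ∑ g ∈ Q, c g) := by
      apply mul_le_mul_of_nonneg_left _ (by positivity)
      linarith [hstar]
    have hexp : ((j : ℝ) / 2) * (w e + ∑ g ∈ D, c g - 2 / (t : ℝ) * ∑ g ∈ Q, c g)
        = ((j : ℝ) / 2) * w e + ((j : ℝ) / 2 - (j : ℝ) / (t : ℝ)) * (∑ g ∈ Q, c g)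
          + ((j : ℝ) / 2) * (∑ g ∈ Q', c g) := by
      rw [← hsplitc]; ring
    have hwe : ((j : ℝ) / 2) * w e ≤ psiA j m * w e :=
      mul_le_mul_of_nonneg_right (psi_ge hj hm1) (hw e he).le
    have hRHS : psiA j m * (w e + ∑ g ∈ D, ∑ f ∈ A.sub g, w f)
        = psiA j m * w e + psiA j m * (∑ g ∈ Q, ∑ f ∈ A.sub g, w f)
          + psiA j m * (∑ g ∈ Q', ∑ f ∈ A.sub g, w f) := by
      rw [← hsplitW]; ring
    have hLHS : c e + ((j : ℝ) - 2) / 2 * c e = (j : ℝ) / 2 * c e := by ring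
    linarith [hA, hB, hce, hexp, hwe, hRHS, hLHS, hsplitT]

end Arbor

namespace Arbor

variable (A : Arbor α)

lemma edges_eq_biUnion : A.edges = (A.children A.root).biUnion A.sub := by
  classical
  apply Finset.Subset.antisymm
  · intro f hf
    have hfv : f ∈ A.verts := A.edge_mem_verts hf
    have hex : ∃ n : ℕ, A.parent^[n] f = A.root := A.reaches_root f hfv
    set k₀ := Nat.find hex with hk₀
    have hspec : A.parent^[k₀] f = A.root := Nat.find_spec hex
    have hmin : ∀ i < k₀, A.parent^[i] f ≠ A.root := fun i hi => Nat.find_min hex hi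
    have hk₀pos : 1 ≤ k₀ := by
      rcases Nat.eq_zero_or_pos k₀ with h | h
      · exfalso
        rw [h] at hspec
        simp only [Function.iterate_zero_apply] at hspec
        exact A.edge_ne_root hf hspec
      · exact h
    have hverts : ∀ i, i < k₀ → A.parent^[i] f ∈ A.verts := by
      intro i
      induction i with
      | zero => intro _; simpa using hfv
      | succ i ihi =>
        intro hi
        have h1 : i < k₀ := by omega
        rw [Function.iterate_succ_apply']
        exact A.parent_mem _ (ihi h1) (hmin i h1)
    have hedges : ∀ i < k₀, A.parent^[i] f ∈ A.edges := by
      intro i hi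
      exact Finset.mem_erase.mpr ⟨hmin i hi, hverts i hi⟩
    rw [Finset.mem_biUnion]
    refine ⟨A.parent^[k₀ - 1] f, ?_, ?_⟩
    · rw [mem_children_iff]
      refine ⟨hedges _ (by omega), ?_⟩
      have hkk : k₀ - 1 + 1 = k₀ := by omega
      have h' : A.parent^[k₀] f = A.parent (A.parent^[k₀ - 1] f) := by
        conv_lhs => rw [← hkk]
        exact Function.iterate_succ_apply' A.parent (k₀ - 1) f
      rw [← h']
      exact hspec
    · rw [mem_sub_iff]
      exact ⟨hf, k₀ - 1, fun i hi => hedges i (by omega), rfl⟩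
  · intro f hf
    rw [Finset.mem_biUnion] at hf
    obtain ⟨g, hg, hmem⟩ := hf
    exact A.sub_subset_edges g hmem

lemma master {w c : α → ℝ} (hw : ∀ v ∈ A.edges, 0 < w v) (hc : ∀ v ∈ A.edges, 0 < c v)
    (htri : A.CombinedTriangle w c) (h2opt : A.Combined2Opt w c)
    {j : ℕ} (hj : 2 ≤ j) :
    ∑ v ∈ A.edges, c v ≤ psiA j A.edges.card * ∑ v ∈ A.edges, w v := by
  classical
  have hdisj := A.pairwise_disjoint_sub A.root
  have h1 : ∑ v ∈ A.edges, c v = ∑ g ∈ A.children A.root, ∑ f ∈ A.sub g, c f := by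
    conv_lhs => rw [A.edges_eq_biUnion]
    exact Finset.sum_biUnion hdisj
  have h2 : ∑ v ∈ A.edges, w v = ∑ g ∈ A.children A.root, ∑ f ∈ A.sub g, w f := by
    conv_lhs => rw [A.edges_eq_biUnion]
    exact Finset.sum_biUnion hdisj
  rw [h1, h2, Finset.mul_sum]
  apply Finset.sum_le_sum
  intro g hg
  have hgE := A.child_mem_edges hg
  have hkey := A.master_sub hw hc htri h2opt hj ((A.sub g).card) g hgE le_rfl
  have hθ : 0 ≤ ((j : ℝ) - 2) / 2 * c g := by
    apply mul_nonneg _ (hc g hgE).le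
    have : (2 : ℝ) ≤ (j : ℝ) := by exact_mod_cast hj
    linarith
  have hmono : psiA j (A.sub g).card ≤ psiA j A.edges.card :=
    psi_mono hj (A.one_le_card_sub hgE) (Finset.card_le_card (A.sub_subset_edges g))
  have hW : 0 ≤ ∑ f ∈ A.sub g, w f :=
    Finset.sum_nonneg fun f hf => (hw f (A.sub_subset_edges g hf)).le
  have := mul_le_mul_of_nonneg_right hmono hW
  linarith

end Arbor


/-- Let `A` be an arborescence with positive weight functions `w, c` on its
edges satisfying the combined triangle inequality and the combined
2-optimality condition, and assume `c(A) ≥ 18 · w(A)`.  Then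
`c(A) ≤ 12 · (log |E(A)| / log log |E(A)|) · w(A)`. -/
theorem arborescence_main_bound {α : Type*} [DecidableEq α]
    (A : Arbor α) (w c : α → ℝ)
    (hw : ∀ v ∈ A.edges, 0 < w v) (hc : ∀ v ∈ A.edges, 0 < c v)
    (htri : A.CombinedTriangle w c) (h2opt : A.Combined2Opt w c)
    (hbig : 18 * ∑ v ∈ A.edges, w v ≤ ∑ v ∈ A.edges, c v) :
    ∑ v ∈ A.edges, c v ≤
      12 * (Real.log (A.edges.card : ℝ) / Real.log (Real.log (A.edges.card : ℝ))) *
        ∑ v ∈ A.edges, w v := by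

  classical
  rcases Finset.eq_empty_or_nonempty A.edges with hE | hE
  · rw [hE]
    simp
  · set n := A.edges.card with hn
    have hn1 : 1 ≤ n := Finset.card_pos.mpr hE
    have hSw : 0 < ∑ v ∈ A.edges, w v := Finset.sum_pos (fun v hv => hw v hv) hE
    have h2 := A.master hw hc htri h2opt (j := 2) le_rfl
    have hψ2 : psiA 2 n = Real.log (n : ℝ) / Real.log 3 + 1 := by
      unfold psiA
      norm_num
    rw [hψ2] at h2
    have hlog3 : (1 : ℝ) ≤ Real.log 3 := by
      rw [Real.le_log_iff_exp_le (by norm_num)]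
      calc Real.exp 1 ≤ 2.7182818286 := Real.exp_one_lt_d9.le
      _ ≤ 3 := by norm_num
    set L := Real.log (n : ℝ) with hL
    have h17 : 17 ≤ L / Real.log 3 := by
      have h18 : (18 : ℝ) * ∑ v ∈ A.edges, w v ≤ (L / Real.log 3 + 1) * ∑ v ∈ A.edges, w v :=
        le_trans hbig h2
      have h' : (18 : ℝ) ≤ L / Real.log 3 + 1 := le_of_mul_le_mul_right h18 hSw
      linarith
    have hlog3pos : (0 : ℝ) < Real.log 3 := by linarith
    have hL17 : 17 ≤ L := by
      rw [le_div_iff₀ hlog3pos] at h17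
      nlinarith
    have hsqrtL : (4 : ℝ) ≤ Real.sqrt L := by
      have h16 : (16 : ℝ) ≤ L := by linarith
      calc (4 : ℝ) = Real.sqrt 16 := by
            rw [show (16 : ℝ) = 4 ^ 2 by norm_num, Real.sqrt_sq (by norm_num)]
      _ ≤ Real.sqrt L := Real.sqrt_le_sqrt h16
    have hsqrtpos : 0 < Real.sqrt L := by linarith
    set l := Real.log L with hl
    have hlpos : 0 < l := Real.log_pos (by linarith)
    have hl2 : l ≤ 2 * Real.sqrt L := by
      have ha : Real.log (Real.sqrt L) ≤ Real.sqrt L - 1 := Real.log_le_sub_one_of_pos hsqrtpos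
      have hb : Real.log (Real.sqrt L) = l / 2 := by rw [hl, Real.log_sqrt (by linarith)]
      linarith
    have hLl : Real.sqrt L / 2 ≤ L / l := by
      have hLL : L = Real.sqrt L * Real.sqrt L := (Real.mul_self_sqrt (by linarith)).symm
      rw [div_le_div_iff₀ (by norm_num) hlpos]
      nlinarith
    have hLl2 : (2 : ℝ) ≤ L / l := by linarith
    set j := Nat.ceil (L / l) with hjdef
    have hjge : (L / l : ℝ) ≤ (j : ℝ) := Nat.le_ceil _
    have hjle : (j : ℝ) ≤ L / l + 1 := by
      have := Nat.ceil_lt_add_one (show (0 : ℝ) ≤ L / l by linarith)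
      linarith
    have hj2 : 2 ≤ j := by
      have : (2 : ℝ) ≤ (j : ℝ) := le_trans hLl2 hjge
      exact_mod_cast this
    have hmaster := A.master hw hc htri h2opt hj2
    have hlog2 : Real.log 2 ≤ l / 4 := by
      have h16 : Real.log 16 ≤ l := by
        rw [hl]
        exact Real.log_le_log (by norm_num) (by linarith)
      have h16' : Real.log 16 = 4 * Real.log 2 := by
        rw [show (16 : ℝ) = 2 ^ 4 by norm_num, Real.log_pow]
        push_cast
        ring
      linarith
    have hlogj : l / 4 ≤ Real.log ((j : ℝ) + 1) := by
      have ha : Real.log (Real.sqrt L / 2) ≤ Real.log ((j : ℝ) + 1) := by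
        apply Real.log_le_log (by positivity)
        nlinarith
      have hb : Real.log (Real.sqrt L / 2) = l / 2 - Real.log 2 := by
        rw [Real.log_div (by positivity) (by norm_num), Real.log_sqrt (by linarith), hl]
      linarith
    have hlogjpos : 0 < Real.log ((j : ℝ) + 1) := by linarith [hlpos]
    have hbound1 : L / Real.log ((j : ℝ) + 1) ≤ 4 * (L / l) := by
      have ha : L / Real.log ((j : ℝ) + 1) ≤ L / (l / 4) :=
        div_le_div_of_nonneg_left (by linarith) (by linarith) hlogj
      have hb : L / (l / 4) = 4 * (L / l) := by
        rw [div_div_eq_mul_div]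
        ring
      linarith
    have hbound2 : (j : ℝ) / 2 ≤ L / l := by linarith
    have hpsi : psiA j n ≤ 12 * (L / l) := by
      unfold psiA
      rw [← hL]
      linarith
    calc ∑ v ∈ A.edges, c v ≤ psiA j n * ∑ v ∈ A.edges, w v := hmaster
    _ ≤ 12 * (L / l) * ∑ v ∈ A.edges, w v := mul_le_mul_of_nonneg_right hpsi hSw.le
    _ = 12 * (Real.log (n : ℝ) / Real.log (Real.log (n : ℝ))) * ∑ v ∈ A.edges, w v := by
        rw [← hL, ← hl]
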